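/- Define ε(x) as in the Trudgian bound and assume |θ(t) − t| < t·ε(t) for t ≥ 149 and π(x) = θ(x)/log x + ∫_2^x θ(t)/(t log²t) dt. Then for all real 149 ≤ x₋ ≤ x₊ the inequality π(x₊) − π(x₋) < x₊(1+ε(x₊))/log x₊ − x₋(1−ε(x₋))/log x₋ + ∫_{x₋}^{x₊} (1+ε(t))/log²t dt holds. -/

import Mathlib

/-- The prime counting function `π(x)`, the number of primes `≤ x`. -/
noncomputable def primePi (x : ℝ) : ℝ := Nat.primeCounting ⌊x⌋₊

/-- The Chebyshev function `θ(x) = ∑_{p ≤ x} log p`. -/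
noncomputable def chebyshevTheta (x : ℝ) : ℝ :=
  ∑ p ∈ (Finset.range (⌊x⌋₊ + 1)).filter Nat.Prime, Real.log p

/-- Trudgian's error function `ε(x)`. -/
noncomputable def eps (x : ℝ) : ℝ :=
  Real.sqrt (8 * Real.log x / (17 * Real.pi * 6.455)) *
    Real.exp (-Real.sqrt (Real.log x / 6.455))

lemma theta_mono : Monotone chebyshevTheta := by
  intro a b hab
  apply Finset.sum_le_sum_of_subset_of_nonneg
  · apply Finset.filter_subset_filter
    exact Finset.range_subset_range.mpr (by have := Nat.floor_le_floor hab; omega)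
  · intro i hi _
    simp only [Finset.mem_filter, Finset.mem_range] at hi
    exact Real.log_nonneg (by exact_mod_cast hi.2.one_lt.le)

lemma eps_pos {x : ℝ} (hx : 149 ≤ x) : 0 < eps x := by
  have hlog : 0 < Real.log x := Real.log_pos (by linarith)
  apply mul_pos
  · apply Real.sqrt_pos.mpr
    positivity
  · exact Real.exp_pos _

theorem primePi_difference_upper_bound
    (hθ : ∀ t : ℝ, 149 ≤ t → |chebyshevTheta t - t| < t * eps t)
    (hπ : ∀ x : ℝ, 2 ≤ x → primePi x = chebyshevTheta x / Real.log x +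
      ∫ t in (2 : ℝ)..x, chebyshevTheta t / (t * (Real.log t) ^ 2))
    (xm xp : ℝ) (hxm : 149 ≤ xm) (hle : xm ≤ xp) :
    primePi xp - primePi xm <
      xp * (1 + eps xp) / Real.log xp - xm * (1 - eps xm) / Real.log xm +
        ∫ t in xm..xp, (1 + eps t) / (Real.log t) ^ 2 := by
  have hxm2 : (2:ℝ) ≤ xm := by linarith
  have hxp2 : (2:ℝ) ≤ xp := by linarith
  -- integrability of theta-integrand on [a,b] with 2 ≤ a ≤ b
  have hInt : ∀ a b : ℝ, 2 ≤ a → a ≤ b →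
      IntervalIntegrable (fun t => chebyshevTheta t / (t * (Real.log t) ^ 2))
        MeasureTheory.volume a b := by
    intro a b ha hab
    have h1 : IntervalIntegrable chebyshevTheta MeasureTheory.volume a b :=
      (theta_mono.monotoneOn _).intervalIntegrable
    have h2 : ContinuousOn (fun t : ℝ => (t * (Real.log t) ^ 2)⁻¹) (Set.uIcc a b) := by
      apply ContinuousOn.inv₀
      · refine continuousOn_id.mul ((Real.continuousOn_log.mono ?_).pow 2)
        intro t ht
        rw [Set.uIcc_of_le hab] at ht
        simp only [Set.mem_compl_iff, Set.mem_singleton_iff]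
        intro h; rw [h] at ht; linarith [ht.1]
      · intro t ht
        rw [Set.uIcc_of_le hab] at ht
        have ht2 : (2:ℝ) ≤ t := le_trans ha ht.1
        have : 0 < Real.log t := Real.log_pos (by linarith)
        positivity
    simpa [div_eq_mul_inv] using h1.mul_continuousOn h2
  have hIab : IntervalIntegrable (fun t => chebyshevTheta t / (t * (Real.log t) ^ 2))
      MeasureTheory.volume 2 xm := hInt 2 xm le_rfl hxm2
  have hIbc : IntervalIntegrable (fun t => chebyshevTheta t / (t * (Real.log t) ^ 2))
      MeasureTheory.volume xm xp := hInt xm xp hxm2 hle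
  -- continuity of the eps-integrand on [xm, xp]
  have hepsC : ContinuousOn (fun t : ℝ => (1 + eps t) / (Real.log t) ^ 2) (Set.uIcc xm xp) := by
    rw [Set.uIcc_of_le hle]
    have hlogC : ContinuousOn Real.log (Set.Icc xm xp) := by
      apply Real.continuousOn_log.mono
      intro t ht
      simp only [Set.mem_compl_iff, Set.mem_singleton_iff]
      intro h; rw [h] at ht; linarith [ht.1]
    apply ContinuousOn.div
    · apply continuousOn_const.add
      apply ContinuousOn.mul
      · exact (Real.continuous_sqrt.comp_continuousOn
          ((hlogC.const_smul (8:ℝ)).div_const _))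
      · exact (Real.continuous_exp.comp_continuousOn
          (((Real.continuous_sqrt.comp_continuousOn (hlogC.div_const _))).neg))
    · exact (hlogC.pow 2)
    · intro t ht
      have : 0 < Real.log t := Real.log_pos (by have := ht.1; linarith)
      positivity
  have hJ : IntervalIntegrable (fun t : ℝ => (1 + eps t) / (Real.log t) ^ 2)
      MeasureTheory.volume xm xp := hepsC.intervalIntegrable
  -- pointwise bound on [xm, xp]
  have hpt : ∀ t ∈ Set.Icc xm xp, chebyshevTheta t / (t * (Real.log t) ^ 2)
      ≤ (1 + eps t) / (Real.log t) ^ 2 := by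
    intro t ht
    have ht149 : (149:ℝ) ≤ t := le_trans hxm ht.1
    have htpos : (0:ℝ) < t := by linarith
    have hlt : chebyshevTheta t < t * (1 + eps t) := by
      have := abs_lt.mp (hθ t ht149)
      nlinarith [this.2]
    have hlog : 0 < Real.log t := Real.log_pos (by linarith)
    calc chebyshevTheta t / (t * (Real.log t) ^ 2)
        ≤ t * (1 + eps t) / (t * (Real.log t) ^ 2) := by
          gcongr
      _ = (1 + eps t) / (Real.log t) ^ 2 := by
          field_simp
  have hmono : (∫ t in xm..xp, chebyshevTheta t / (t * (Real.log t) ^ 2))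
      ≤ ∫ t in xm..xp, (1 + eps t) / (Real.log t) ^ 2 :=
    intervalIntegral.integral_mono_on hle hIbc hJ hpt
  -- split integral
  have hsplit : (∫ t in (2:ℝ)..xm, chebyshevTheta t / (t * (Real.log t) ^ 2))
      + (∫ t in xm..xp, chebyshevTheta t / (t * (Real.log t) ^ 2))
      = ∫ t in (2:ℝ)..xp, chebyshevTheta t / (t * (Real.log t) ^ 2) :=
    intervalIntegral.integral_add_adjacent_intervals hIab hIbc
  -- endpoint bounds
  have hlogm : 0 < Real.log xm := Real.log_pos (by linarith)
  have hlogp : 0 < Real.log xp := Real.log_pos (by linarith)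
  have hup : chebyshevTheta xp / Real.log xp < xp * (1 + eps xp) / Real.log xp := by
    have h := abs_lt.mp (hθ xp (by linarith))
    have hnum : chebyshevTheta xp < xp * (1 + eps xp) := by nlinarith [h.2]
    rw [div_lt_div_iff₀ hlogp hlogp]
    nlinarith
  have hdown : xm * (1 - eps xm) / Real.log xm < chebyshevTheta xm / Real.log xm := by
    have h := abs_lt.mp (hθ xm hxm)
    have : xm * (1 - eps xm) < chebyshevTheta xm := by nlinarith [h.1]
    rw [div_lt_div_iff₀ hlogm hlogm]
    nlinarith
  rw [hπ xp hxp2, hπ xm hxm2, ← hsplit]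
  linarith
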